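/- arXiv:2104.07426 — 4 statements merged into one kernel-verified Lean document; each statement's English description precedes it below -/
import Mathlib

section
/- Let n ≥ 1 and let q₁, …, q_{n+2} ∈ 𝕊ⁿ ⊂ ℝ^{n+1} be the vertices of a regular simplex inscribed in the unit sphere (so Σ_{i=1}^{n+2} q_i = 0 and ⟨q_i, q_j⟩ = −1/(n+1) for i ≠ j). Define linear functions l_i(y) = ⟨q_i, y⟩ and set h(y) = Σ_{i<j<k, all distinct} l_i(y) l_j(y) l_k(y) (the third elementary symmetric polynomial in l₁(y), …, l_{n+2}(y)). Then h is a harmonic polynomial on ℝ^{n+1}: Δh = 0. -/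
/-!
Write `lᵢ = ⟪qᵢ, ·⟫`. Differentiating `h = Σ_{#s = 3} ∏_{i ∈ s} lᵢ` twice and taking the trace
in an orthonormal basis turns each ordered pair `i ≠ j` in `s` into `⟪qᵢ, qⱼ⟫ = -1/(n+1)`,
times the remaining factor `l_k`. So `Δh` is a multiple of `Σ_{#s = 3} Σ_{k ∈ s} l_k`, and by
double counting this is a multiple of `Σ_k l_k = ⟪Σ_k q_k, ·⟫ = 0`.
-/

open Finset
open scoped RealInnerProductSpace

theorem Finset.sum_powersetCard_sum {α M : Type*} [DecidableEq α] [AddCommMonoid M]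
    (t : Finset α) {n : ℕ} (hn : 1 ≤ n) (f : α → M) :
    ∑ s ∈ t.powersetCard n, ∑ k ∈ s, f k = (#t - 1).choose (n - 1) • ∑ k ∈ t, f k := by
  rw [sum_comm' (t' := t) (s' := fun k => (t.powersetCard n).filter (k ∈ ·)), smul_sum]
  · refine sum_congr rfl fun k hk => ?_
    have hcount := card_filter_powersetCard_subset {k} t n (by simpa) (by simpa)
    simp only [singleton_subset_iff, card_singleton] at hcount
    rw [sum_const, hcount]
  · intro s k
    simp only [mem_filter, mem_powersetCard]
    constructor
    · rintro ⟨⟨hst, hs⟩, hk⟩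
      exact ⟨⟨⟨hst, hs⟩, hk⟩, hst hk⟩
    · rintro ⟨⟨hs, hk⟩, -⟩
      exact ⟨hs, hk⟩

theorem Finset.sum_sum_erase_prod_erase_of_card_eq_three {α R : Type*} [DecidableEq α]
    [CommSemiring R] {s : Finset α} (hs : #s = 3) (f : α → R) :
    ∑ i ∈ s, ∑ j ∈ s.erase i, ∏ k ∈ (s.erase i).erase j, f k = 2 * ∑ k ∈ s, f k := by
  obtain ⟨a, b, c, hab, hac, hbc, rfl⟩ := card_eq_three.mp hs
  simp [sum_insert, hab, hac, hbc, erase_insert_of_ne, erase_insert_eq_erase]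
  ring

section ProductsOfLinearForms

variable {E : Type*} [NormedAddCommGroup E] [InnerProductSpace ℝ E] {κ : Type*} [DecidableEq κ]
  (q : κ → E) (S : Finset (Finset κ))

theorem hasFDerivAt_sum_prod_inner (y : E) :
    HasFDerivAt (fun z => ∑ s ∈ S, ∏ i ∈ s, ⟪q i, z⟫)
      (∑ s ∈ S, ∑ i ∈ s, (∏ j ∈ s.erase i, ⟪q j, y⟫) • innerSL ℝ (q i)) y :=
  HasFDerivAt.fun_sum fun _ _ => HasFDerivAt.finsetProd fun i _ => (innerSL ℝ (q i)).hasFDerivAt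

theorem fderiv_sum_prod_inner_apply (y v : E) :
    fderiv ℝ (fun z => ∑ s ∈ S, ∏ i ∈ s, ⟪q i, z⟫) y v
      = ∑ s ∈ S, ∑ i ∈ s, ⟪q i, v⟫ * ∏ j ∈ s.erase i, ⟪q j, y⟫ := by
  simp [(hasFDerivAt_sum_prod_inner q S y).fderiv, mul_comm]

theorem fderiv_fderiv_sum_prod_inner_apply (y v w : E) :
    fderiv ℝ (fun z => fderiv ℝ (fun z => ∑ s ∈ S, ∏ i ∈ s, ⟪q i, z⟫) z v) y w
      = ∑ s ∈ S, ∑ i ∈ s, ∑ j ∈ s.erase i,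
          ⟪q i, v⟫ * ⟪q j, w⟫ * ∏ k ∈ (s.erase i).erase j, ⟪q k, y⟫ := by
  simp_rw [fderiv_sum_prod_inner_apply]
  have hderiv : HasFDerivAt (fun z => ∑ s ∈ S, ∑ i ∈ s, ⟪q i, v⟫ * ∏ j ∈ s.erase i, ⟪q j, z⟫)
      (∑ s ∈ S, ∑ i ∈ s, ⟪q i, v⟫ •
        ∑ j ∈ s.erase i, (∏ k ∈ (s.erase i).erase j, ⟪q k, y⟫) • innerSL ℝ (q j)) y :=
    HasFDerivAt.fun_sum fun s _ => HasFDerivAt.fun_sum fun i _ =>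
      (HasFDerivAt.finsetProd fun j _ => (innerSL ℝ (q j)).hasFDerivAt).const_mul ⟪q i, v⟫
  simp [hderiv.fderiv, mul_sum, mul_comm, mul_assoc]

theorem sum_fderiv_fderiv_sum_prod_inner_orthonormalBasis {ι : Type*} [Fintype ι]
    (b : OrthonormalBasis ι ℝ E) (y : E) :
    ∑ m, fderiv ℝ (fun z => fderiv ℝ (fun z => ∑ s ∈ S, ∏ i ∈ s, ⟪q i, z⟫) z (b m)) y (b m)
      = ∑ s ∈ S, ∑ i ∈ s, ∑ j ∈ s.erase i, ⟪q i, q j⟫ * ∏ k ∈ (s.erase i).erase j, ⟪q k, y⟫ := by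
  simp_rw [fderiv_fderiv_sum_prod_inner_apply]
  rw [sum_comm]
  refine sum_congr rfl fun s _ => ?_
  rw [sum_comm]
  refine sum_congr rfl fun i _ => ?_
  rw [sum_comm]
  refine sum_congr rfl fun j _ => ?_
  simp_rw [← sum_mul, real_inner_comm (b _) (q j), b.sum_inner_mul_inner]

theorem sum_sum_erase_inner_mul_prod_of_card_eq_three {c : ℝ}
    (hangle : ∀ i j, i ≠ j → ⟪q i, q j⟫ = c) {s : Finset κ} (hs : #s = 3) (y : E) :
    ∑ i ∈ s, ∑ j ∈ s.erase i, ⟪q i, q j⟫ * ∏ k ∈ (s.erase i).erase j, ⟪q k, y⟫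
      = c * (2 * ∑ k ∈ s, ⟪q k, y⟫) := by
  rw [← sum_sum_erase_prod_erase_of_card_eq_three hs, mul_sum]
  refine sum_congr rfl fun i _ => ?_
  rw [mul_sum]
  refine sum_congr rfl fun j hj => ?_
  rw [hangle i j (ne_of_mem_erase hj).symm]

end ProductsOfLinearForms

theorem stmt1_general (n : ℕ)
    (q : Fin (n + 2) → EuclideanSpace ℝ (Fin (n + 1)))
    (hsum : ∑ i, q i = 0)
    (hangle : ∀ i j, i ≠ j → ⟪q i, q j⟫ = -1 / (n + 1))
    (h : EuclideanSpace ℝ (Fin (n + 1)) → ℝ)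
    (hdef : h = fun y => ∑ s ∈ (Finset.univ : Finset (Fin (n + 2))).powersetCard 3,
      ∏ i ∈ s, ⟪q i, y⟫) :
    ∀ y, ∑ i, fderiv ℝ (fun z => fderiv ℝ h z (EuclideanSpace.single i 1)) y
        (EuclideanSpace.single i 1) = 0 := by
  intro y
  subst hdef
  simp only [← EuclideanSpace.basisFun_apply (Fin (n + 1)) ℝ]
  rw [sum_fderiv_fderiv_sum_prod_inner_orthonormalBasis,
    sum_congr rfl fun s hs => sum_sum_erase_inner_mul_prod_of_card_eq_three q hangle
      (mem_powersetCard.mp hs).2 y,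
    ← mul_sum, ← mul_sum, sum_powersetCard_sum _ (by norm_num), ← sum_inner, hsum,
    inner_zero_left, smul_zero, mul_zero, mul_zero]

/-- The third elementary symmetric polynomial `h(y) = Σ_{i<j<k} ⟨q_i,y⟩⟨q_j,y⟩⟨q_k,y⟩`
in the linear forms associated to the vertices `q₁,…,q_{n+2}` of a regular simplex
inscribed in `𝕊ⁿ ⊂ ℝ^{n+1}` is harmonic: `Δh = 0`, where the Laplacian is the sum of
the second partial derivatives. -/
theorem stmt1 (n : ℕ) (hn : 1 ≤ n)
    (q : Fin (n + 2) → EuclideanSpace ℝ (Fin (n + 1)))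
    (hunit : ∀ i, ‖q i‖ = 1)
    (hsum : ∑ i, q i = 0)
    (hangle : ∀ i j, i ≠ j → ⟪q i, q j⟫ = -1 / (n + 1))
    (h : EuclideanSpace ℝ (Fin (n + 1)) → ℝ)
    (hdef : h = fun y => ∑ s ∈ (Finset.univ : Finset (Fin (n + 2))).powersetCard 3,
      ∏ i ∈ s, ⟪q i, y⟫) :
    ∀ y, ∑ i, fderiv ℝ (fun z => fderiv ℝ h z (EuclideanSpace.single i 1)) y
        (EuclideanSpace.single i 1) = 0 :=
  stmt1_general n q hsum hangle h hdef
end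

section
/- Fix n ≥ 1, p < −n−1, γ = (p+n+1)/(n+1) < 0, and a continuous function φ : (0,∞) → [0,∞) with φ(r) → φ_∞ ∈ (0,∞) as r → ∞ and φ(r) = O(r^N) as r → 0 for all N (rapid decay at 0). Define f(r) = [(1+r²)^{(n+1)/2} / rⁿ]^γ · ( ∫₁^r φ(s)/s · [(1+s²)^{(n+1)/2} / sⁿ]^{−γ} ds + β ). If β > ∫₀¹ φ(s)/s · [(1+s²)^{(n+1)/2} / sⁿ]^{−γ} ds, then f(r) > 0 for all r ∈ (0,∞), lim_{r→0⁺} f(r) = 0, and lim_{r→∞} f(r) = φ_∞ / |γ|. -/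
/-!
Write `h(r) = (1+r²)^{(n+1)/2}/rⁿ` and `G = h^{-γ}`, so that
`f(r) = (β + ∫₁^r φ(s) G(s)/s ds) / G(r)`. Since `φ` decays faster than any power at `0`, the
nonnegative integrand is bounded on `(0,1)`, so the numerator is at least `β - ∫₀¹ φ G / s > 0`
and stays bounded as `r → 0⁺`, while `G(r) ≥ r^{-n|γ|} → ∞`. At infinity,
`G' = -γ (s²-n)/(s(1+s²)) G`, so the integrand is `ψ G'` with
`ψ(s) = φ(s) (1+s²)/(-γ (s²-n)) → φ_∞/|γ|`; since `G → ∞`, the integral form of the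
Stolz–Cesàro theorem, `(c + ∫_a^r ψ G')/G(r) → lim ψ`, gives the limit.
-/

open Set Filter Real MeasureTheory Topology intervalIntegral

section StolzCesaro

variable {G g ψ : ℝ → ℝ} {a : ℝ}

theorem isLittleO_integral_mul_of_hasDerivAt
    (hG : ∀ s ∈ Ici a, HasDerivAt G (g s) s) (hg : ContinuousOn g (Ici a))
    (hg0 : ∀ s ∈ Ici a, 0 ≤ g s) (hψ : ContinuousOn ψ (Ici a))
    (hGtop : Tendsto G atTop atTop) (hψ0 : Tendsto ψ atTop (𝓝 0)) :
    (fun r => ∫ s in a..r, ψ s * g s) =o[atTop] G := by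
  have hsub : ∀ {u v}, a ≤ u → a ≤ v → uIcc u v ⊆ Ici a :=
    fun hu hv _ hx => (le_inf hu hv).trans hx.1
  have hint : ∀ {u v}, a ≤ u → a ≤ v → IntervalIntegrable (fun s => ψ s * g s) volume u v :=
    fun hu hv => ((hψ.mul hg).mono (hsub hu hv)).intervalIntegrable
  rw [Asymptotics.isLittleO_iff]
  intro c hc
  obtain ⟨R, hRa, hR⟩ : ∃ R, a ≤ R ∧ ∀ s ≥ R, ‖ψ s‖ ≤ c / 2 := by
    obtain ⟨R, hR⟩ :=
      eventually_atTop.1 <| hψ0.eventually (Metric.closedBall_mem_nhds 0 (half_pos hc))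
    exact ⟨max a R, le_max_left _ _, fun s hs =>
      mem_closedBall_zero_iff.1 (hR s ((le_max_right _ _).trans hs))⟩
  set C := ‖∫ s in a..R, ψ s * g s‖
  filter_upwards [eventually_ge_atTop R, hGtop.eventually_ge_atTop 0,
    (hGtop.const_mul_atTop (half_pos hc)).eventually_ge_atTop (C - c / 2 * G R)]
    with r hrR hr0 hrC
  have hRr : uIcc R r ⊆ Ici a := hsub hRa (hRa.trans hrR)
  have htail : ‖∫ s in R..r, ψ s * g s‖ ≤ c / 2 * (G r - G R) := by
    calc ‖∫ s in R..r, ψ s * g s‖ ≤ ∫ s in R..r, c / 2 * g s := by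
          refine norm_integral_le_of_norm_le hrR (ae_of_all _ fun s hs => ?_)
            ((hg.mono hRr).intervalIntegrable.const_mul _)
          have hsa : s ∈ Ici a := hRr (by rw [uIcc_of_le hrR]; exact Ioc_subset_Icc_self hs)
          rw [norm_mul, Real.norm_of_nonneg (hg0 s hsa)]
          exact mul_le_mul_of_nonneg_right (hR s hs.1.le) (hg0 s hsa)
      _ = c / 2 * (G r - G R) := by
          rw [intervalIntegral.integral_const_mul,
            integral_eq_sub_of_hasDerivAt (fun s hs => hG s (hRr hs))
              (hg.mono hRr).intervalIntegrable]
  rw [← integral_add_adjacent_intervals (hint le_rfl hRa) (hint hRa (hRa.trans hrR)),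
    Real.norm_of_nonneg hr0]
  linarith [norm_add_le_of_le (le_refl C) htail]

theorem tendsto_add_integral_mul_div_of_hasDerivAt (c L : ℝ)
    (hG : ∀ s ∈ Ici a, HasDerivAt G (g s) s) (hg : ContinuousOn g (Ici a))
    (hg0 : ∀ s ∈ Ici a, 0 ≤ g s) (hψ : ContinuousOn ψ (Ici a))
    (hGtop : Tendsto G atTop atTop) (hψL : Tendsto ψ atTop (𝓝 L)) :
    Tendsto (fun r => (c + ∫ s in a..r, ψ s * g s) / G r) atTop (𝓝 L) := by
  have hsmall := isLittleO_integral_mul_of_hasDerivAt (ψ := fun s => ψ s - L) hG hg hg0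
    (hψ.sub continuousOn_const) hGtop (by simpa using hψL.sub_const L)
  have hlim := ((tendsto_const_nhds (x := c - L * G a)).div_atTop hGtop).add
    (hsmall.tendsto_div_nhds_zero.add_const L)
  rw [zero_add, zero_add] at hlim
  refine hlim.congr' ?_
  filter_upwards [eventually_ge_atTop a, hGtop.eventually_gt_atTop 0] with r hra hr0
  have hsub : uIcc a r ⊆ Ici a := fun _ hx => (le_inf le_rfl hra).trans hx.1
  have hsplit : ∫ s in a..r, ψ s * g s = (∫ s in a..r, (ψ s - L) * g s) + L * (G r - G a) := by
    have hint : IntervalIntegrable (fun s => (ψ s - L) * g s) volume a r :=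
      (((hψ.sub continuousOn_const).mul hg).mono hsub).intervalIntegrable
    rw [← integral_eq_sub_of_hasDerivAt (fun s hs => hG s (hsub hs))
      (hg.mono hsub).intervalIntegrable, ← intervalIntegral.integral_const_mul,
      ← integral_add hint ((hg.mono hsub).intervalIntegrable.const_mul _)]
    congr 1 with s
    ring
  rw [hsplit]
  field_simp
  ring

end StolzCesaro

theorem intervalIntegrable_zero_of_bounded {F : ℝ → ℝ} {M r : ℝ} (hF : ContinuousOn F (Ioi 0))
    (hM : ∀ s ∈ Ioo (0 : ℝ) 1, ‖F s‖ ≤ M) (hr : 0 < r) : IntervalIntegrable F volume 0 r := by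
  have h01 : IntervalIntegrable F volume 0 1 := by
    rw [intervalIntegrable_iff_integrableOn_Ioc_of_le zero_le_one,
      integrableOn_Ioc_iff_integrableOn_Ioo]
    exact .of_bound measure_Ioo_lt_top
      ((hF.mono Ioo_subset_Ioi_self).aestronglyMeasurable measurableSet_Ioo) M
      ((ae_restrict_iff' measurableSet_Ioo).2 (ae_of_all _ hM))
  exact h01.trans (hF.mono fun s hs => (lt_min one_pos hr).trans_le hs.1).intervalIntegrable

noncomputable def radialWeight (n : ℕ) (s : ℝ) : ℝ := (1 + s ^ 2) ^ ((n + 1 : ℝ) / 2) / s ^ n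

namespace radialWeight

variable {n : ℕ} {s : ℝ}

theorem pos (hs : 0 < s) : 0 < radialWeight n s := by
  unfold radialWeight; positivity

theorem hasDerivAt (hs : 0 < s) :
    HasDerivAt (radialWeight n) (radialWeight n s * ((s ^ 2 - n) / (s * (1 + s ^ 2)))) s := by
  have h1 : 0 < 1 + s ^ 2 := by positivity
  have hu := ((hasDerivAt_pow 2 s).const_add 1).rpow_const (p := ((n + 1 : ℝ) / 2))
    (Or.inl h1.ne')
  refine (hu.div (hasDerivAt_pow n s) (pow_ne_zero n hs.ne')).congr_deriv ?_
  rw [Real.rpow_sub_one h1.ne']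
  unfold radialWeight
  rcases n with _ | k
  · field_simp; ring
  · simp only [Nat.add_sub_cancel, pow_succ]
    push_cast
    field_simp
    ring

theorem continuousOn : ContinuousOn (radialWeight n) (Ioi 0) :=
  fun _ hs => (hasDerivAt hs).continuousAt.continuousWithinAt

theorem self_le (hs : 0 < s) : s ≤ radialWeight n s := by
  unfold radialWeight
  rw [le_div_iff₀ (by positivity), ← pow_succ']
  calc s ^ (n + 1) = (s ^ 2) ^ ((n + 1 : ℝ) / 2) := by
        rw [← Real.rpow_natCast, ← Real.rpow_natCast, ← Real.rpow_mul hs.le]; push_cast; ring_nf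
    _ ≤ (1 + s ^ 2) ^ ((n + 1 : ℝ) / 2) := by gcongr; linarith

theorem le_of_le_one (hs : 0 < s) (hs1 : s ≤ 1) :
    radialWeight n s ≤ 2 ^ ((n + 1 : ℝ) / 2) / s ^ n := by
  unfold radialWeight
  gcongr
  nlinarith

theorem tendsto_atTop : Tendsto (radialWeight n) atTop atTop :=
  tendsto_atTop_mono' _ (eventually_gt_atTop 0 |>.mono fun _ hs => self_le hs) tendsto_id

theorem tendsto_nhdsGT_zero (hn : n ≠ 0) : Tendsto (radialWeight n) (𝓝[>] 0) atTop := by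
  have hpow : Tendsto (fun s : ℝ => s ^ n) (𝓝[>] 0) (𝓝[>] 0) := by
    refine tendsto_nhdsWithin_of_tendsto_nhds_of_eventually_within _ ?_ ?_
    · simpa [zero_pow hn] using ((continuous_pow n).tendsto (0 : ℝ)).mono_left nhdsWithin_le_nhds
    · filter_upwards [self_mem_nhdsWithin] with s (hs : 0 < s) using pow_pos hs n
  refine tendsto_atTop_mono' _ ?_ hpow.inv_tendsto_nhdsGT_zero
  filter_upwards [self_mem_nhdsWithin] with s (hs : 0 < s)
  unfold radialWeight
  rw [inv_eq_one_div]
  exact div_le_div_of_nonneg_right (Real.one_le_rpow (by nlinarith) (by positivity))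
    (by positivity)

theorem continuousOn_rpow (p : ℝ) : ContinuousOn (fun x => radialWeight n x ^ p) (Ioi 0) :=
  continuousOn.rpow_const fun _ hs => Or.inl (pos hs).ne'

theorem hasDerivAt_rpow (hs : 0 < s) (p : ℝ) :
    HasDerivAt (fun x => radialWeight n x ^ p)
      (p * ((s ^ 2 - n) / (s * (1 + s ^ 2))) * radialWeight n s ^ p) s := by
  have hw := pos (n := n) hs
  refine ((hasDerivAt hs).rpow_const (p := p) (Or.inl hw.ne')).congr_deriv ?_
  rw [Real.rpow_sub_one hw.ne']
  field_simp

end radialWeight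

noncomputable def weightedIntegrand (n : ℕ) (γ : ℝ) (φ : ℝ → ℝ) (s : ℝ) : ℝ :=
  φ s / s * radialWeight n s ^ (-γ)

noncomputable def radialSolution (n : ℕ) (γ β : ℝ) (φ : ℝ → ℝ) (r : ℝ) : ℝ :=
  radialWeight n r ^ γ * ((∫ s in (1 : ℝ)..r, weightedIntegrand n γ φ s) + β)

section RadialSolution

variable {n : ℕ} {γ β : ℝ} {φ : ℝ → ℝ}

theorem weightedIntegrand_nonneg (hφ : ∀ s ∈ Ioi (0 : ℝ), 0 ≤ φ s) {s : ℝ} (hs : 0 < s) :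
    0 ≤ weightedIntegrand n γ φ s :=
  mul_nonneg (div_nonneg (hφ s hs) hs.le) (Real.rpow_nonneg (radialWeight.pos hs).le _)

theorem continuousOn_weightedIntegrand (hφ : ContinuousOn φ (Ioi 0)) :
    ContinuousOn (weightedIntegrand n γ φ) (Ioi 0) :=
  (hφ.div continuousOn_id fun _ hs => ne_of_gt hs).mul (radialWeight.continuousOn_rpow _)

theorem exists_weightedIntegrand_le (hγ : γ ≤ 0)
    (hdecay : ∀ N : ℕ, ∃ C : ℝ, 0 < C ∧ ∀ r ∈ Ioo (0 : ℝ) 1, φ r ≤ C * r ^ N) :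
    ∃ M, ∀ s ∈ Ioo (0 : ℝ) 1, weightedIntegrand n γ φ s ≤ M := by
  set k := ⌈n * -γ⌉₊
  obtain ⟨C, hC, hφC⟩ := hdecay (k + 1)
  refine ⟨C * 2 ^ ((n + 1 : ℝ) / 2 * -γ), fun s hs => ?_⟩
  obtain ⟨hs0, hs1⟩ := hs
  have hw : radialWeight n s ^ (-γ) ≤ 2 ^ ((n + 1 : ℝ) / 2 * -γ) / s ^ (n * -γ) := by
    calc radialWeight n s ^ (-γ) ≤ (2 ^ ((n + 1 : ℝ) / 2) / s ^ n) ^ (-γ) :=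
          Real.rpow_le_rpow (radialWeight.pos hs0).le
            (radialWeight.le_of_le_one hs0 hs1.le) (by linarith)
      _ = _ := by
          rw [Real.div_rpow (by positivity) (by positivity), ← Real.rpow_mul (by norm_num),
            ← Real.rpow_natCast, ← Real.rpow_mul hs0.le]
  have hk : s ^ k ≤ s ^ (n * -γ) := by
    rw [← Real.rpow_natCast]
    exact Real.rpow_le_rpow_of_exponent_ge hs0 hs1.le (Nat.le_ceil _)
  calc weightedIntegrand n γ φ s
      ≤ C * s ^ (k + 1) / s * (2 ^ ((n + 1 : ℝ) / 2 * -γ) / s ^ (n * -γ)) :=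
        mul_le_mul (div_le_div_of_nonneg_right (hφC s ⟨hs0, hs1⟩) hs0.le) hw
          (Real.rpow_nonneg (radialWeight.pos hs0).le _) (by positivity)
    _ = C * 2 ^ ((n + 1 : ℝ) / 2 * -γ) * (s ^ k / s ^ (n * -γ)) := by
        rw [pow_succ]; field_simp
    _ ≤ C * 2 ^ ((n + 1 : ℝ) / 2 * -γ) :=
        mul_le_of_le_one_right (by positivity) ((div_le_one (by positivity)).2 hk)

theorem intervalIntegrable_weightedIntegrand (hγ : γ ≤ 0) (hφcont : ContinuousOn φ (Ioi 0))
    (hφ : ∀ s ∈ Ioi (0 : ℝ), 0 ≤ φ s)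
    (hdecay : ∀ N : ℕ, ∃ C : ℝ, 0 < C ∧ ∀ r ∈ Ioo (0 : ℝ) 1, φ r ≤ C * r ^ N)
    {r : ℝ} (hr : 0 < r) : IntervalIntegrable (weightedIntegrand n γ φ) volume 0 r := by
  obtain ⟨M, hM⟩ := exists_weightedIntegrand_le (n := n) hγ hdecay
  refine intervalIntegrable_zero_of_bounded (continuousOn_weightedIntegrand hφcont) (M := M)
    (fun s hs => ?_) hr
  rw [Real.norm_of_nonneg (weightedIntegrand_nonneg hφ hs.1)]
  exact hM s hs

theorem radialSolution_pos (hφ : ∀ s ∈ Ioi (0 : ℝ), 0 ≤ φ s)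
    (hint : ∀ r > 0, IntervalIntegrable (weightedIntegrand n γ φ) volume 0 r)
    (hβ : ∫ s in (0 : ℝ)..1, weightedIntegrand n γ φ s < β) {r : ℝ} (hr : 0 < r) :
    0 < radialSolution n γ β φ r := by
  have hmass : 0 ≤ ∫ s in (0 : ℝ)..r, weightedIntegrand n γ φ s := by
    rw [integral_of_le hr.le]
    exact setIntegral_nonneg measurableSet_Ioc fun s hs => weightedIntegrand_nonneg hφ hs.1
  refine mul_pos (Real.rpow_pos_of_pos (radialWeight.pos hr) _) ?_
  rw [← integral_interval_sub_left (hint r hr) (hint 1 one_pos)]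
  linarith

theorem tendsto_radialSolution_nhdsGT_zero (hn : n ≠ 0) (hγ : γ < 0)
    (hint : IntervalIntegrable (weightedIntegrand n γ φ) volume 0 1) :
    Tendsto (radialSolution n γ β φ) (𝓝[>] 0) (𝓝 0) := by
  have hIcc : uIcc (0 : ℝ) 1 ∈ 𝓝[>] (0 : ℝ) := mem_of_superset (Ioo_mem_nhdsGT one_pos)
    (by rw [uIcc_of_le zero_le_one]; exact Ioo_subset_Icc_self)
  have hprimitive : Tendsto (fun r => ∫ s in (1 : ℝ)..r, weightedIntegrand n γ φ s) (𝓝[>] 0)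
      (𝓝 (∫ s in (1 : ℝ)..0, weightedIntegrand n γ φ s)) :=
    ((continuousOn_primitive_interval' hint right_mem_uIcc).continuousWithinAt
      left_mem_uIcc).tendsto.mono_left (nhdsWithin_le_of_mem hIcc)
  have hweight : Tendsto (fun r => radialWeight n r ^ γ) (𝓝[>] 0) (𝓝 0) := by
    simpa [Function.comp_def] using
      (tendsto_rpow_neg_atTop (neg_pos.2 hγ)).comp (radialWeight.tendsto_nhdsGT_zero hn)
  unfold radialSolution
  simpa only [zero_mul] using hweight.mul (hprimitive.add_const β)

theorem radialSolution_eq_div (hφcont : ContinuousOn φ (Ioi 0)) {a r : ℝ} (ha : 0 < a)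
    (hr : 0 < r) :
    radialSolution n γ β φ r = ((∫ s in (1 : ℝ)..a, weightedIntegrand n γ φ s) + β +
      ∫ s in a..r, weightedIntegrand n γ φ s) / radialWeight n r ^ (-γ) := by
  have hint : ∀ {u v : ℝ}, 0 < u → 0 < v →
      IntervalIntegrable (weightedIntegrand n γ φ) volume u v := fun hu hv =>
    ((continuousOn_weightedIntegrand hφcont).mono
      fun _ hx => (lt_min hu hv).trans_le hx.1).intervalIntegrable
  rw [radialSolution, ← integral_add_adjacent_intervals (hint one_pos ha) (hint ha hr),
    show γ = -(-γ) by ring, Real.rpow_neg (radialWeight.pos hr).le, neg_neg]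
  ring

/-- The second factor is the derivative of `radialWeight n ^ (-γ)`
(`radialWeight.hasDerivAt_rpow`), and the first one tends to `lim φ / (-γ)`. -/
theorem weightedIntegrand_eq_mul (hγ : γ ≠ 0) {s : ℝ} (hs : 0 < s) (hsn : s ^ 2 - n ≠ 0) :
    weightedIntegrand n γ φ s = φ s / -γ * (1 + (n + 1) / (s ^ 2 - n)) *
      (-γ * ((s ^ 2 - n) / (s * (1 + s ^ 2))) * radialWeight n s ^ (-γ)) := by
  simp only [weightedIntegrand]
  field_simp
  ring

theorem tendsto_radialSolution_atTop (hγ : γ < 0) (hφcont : ContinuousOn φ (Ioi 0)) {L : ℝ}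
    (hφ : Tendsto φ atTop (𝓝 L)) :
    Tendsto (radialSolution n γ β φ) atTop (𝓝 (L / -γ)) := by
  set a : ℝ := n + 1
  have ha : ∀ s ∈ Ici a, 0 < s ∧ (n : ℝ) < s ^ 2 := fun s hs => by
    have hs : (n : ℝ) + 1 ≤ s := hs
    have hn : (0 : ℝ) ≤ n := n.cast_nonneg
    exact ⟨by linarith, by nlinarith⟩
  set G := fun s => radialWeight n s ^ (-γ)
  set g := fun s : ℝ => -γ * ((s ^ 2 - n) / (s * (1 + s ^ 2))) * G s
  set ψ := fun s : ℝ => φ s / -γ * (1 + (n + 1) / (s ^ 2 - n))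
  have hG : ∀ s ∈ Ici a, HasDerivAt G (g s) s := fun s hs =>
    radialWeight.hasDerivAt_rpow (ha s hs).1 _
  have hg : ContinuousOn g (Ici a) :=
    (continuousOn_const.mul (ContinuousOn.div (by fun_prop) (by fun_prop)
      fun s hs => (mul_pos (ha s hs).1 (by positivity : (0 : ℝ) < 1 + s ^ 2)).ne')).mul
      ((radialWeight.continuousOn_rpow _).mono fun s hs => (ha s hs).1)
  have hg0 : ∀ s ∈ Ici a, 0 ≤ g s := fun s hs => by
    obtain ⟨hs0, hsn⟩ := ha s hs
    have : 0 ≤ G s := Real.rpow_nonneg (radialWeight.pos hs0).le _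
    have : 0 ≤ (s ^ 2 - n) / (s * (1 + s ^ 2)) :=
      div_nonneg (by linarith) (mul_pos hs0 (by positivity)).le
    have : 0 ≤ -γ := by linarith
    positivity
  have hψ : ContinuousOn ψ (Ici a) :=
    ((hφcont.mono fun s hs => (ha s hs).1).div_const _).mul (continuousOn_const.add
      (continuousOn_const.div (by fun_prop) fun s hs => (sub_pos.2 (ha s hs).2).ne'))
  have hGtop : Tendsto G atTop atTop :=
    (tendsto_rpow_atTop (neg_pos.2 hγ)).comp radialWeight.tendsto_atTop
  have hψL : Tendsto ψ atTop (𝓝 (L / -γ)) := by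
    have hden : Tendsto (fun s : ℝ => s ^ 2 - n) atTop atTop := by
      simpa [sub_eq_add_neg] using
        tendsto_atTop_add_const_right _ (-(n : ℝ)) (tendsto_pow_atTop two_ne_zero)
    simpa using (hφ.div_const (-γ)).mul ((tendsto_const_nhds (x := (1 : ℝ))).add
      ((tendsto_const_nhds (x := (n : ℝ) + 1)).div_atTop hden))
  refine (tendsto_add_integral_mul_div_of_hasDerivAt
    ((∫ s in (1 : ℝ)..a, weightedIntegrand n γ φ s) + β) _ hG hg hg0 hψ hGtop hψL).congr' ?_
  filter_upwards [eventually_ge_atTop a] with r hr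
  have ha0 : 0 < a := (ha a (mem_Ici.2 le_rfl)).1
  rw [radialSolution_eq_div hφcont ha0 (ha0.trans_le hr)]
  congr 2
  refine integral_congr fun s hs => ?_
  rw [uIcc_of_le hr] at hs
  obtain ⟨hs0, hsn⟩ := ha s hs.1
  exact (weightedIntegrand_eq_mul hγ.ne hs0 (sub_pos.2 hsn).ne').symm

end RadialSolution

theorem stmt7_general (n : ℕ) (hn : 1 ≤ n) (p : ℝ) (hp : p < -(n + 1 : ℝ))
    (γ : ℝ) (hγ : γ = (p + n + 1) / (n + 1))
    (φ : ℝ → ℝ) (hφcont : ContinuousOn φ (Ioi 0))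
    (hφnonneg : ∀ r ∈ Ioi (0 : ℝ), 0 ≤ φ r)
    (φinf : ℝ) (hφinf : Tendsto φ atTop (nhds φinf))
    (hdecay : ∀ N : ℕ, ∃ C : ℝ, 0 < C ∧ ∀ r ∈ Ioo (0 : ℝ) 1, φ r ≤ C * r ^ N)
    (β : ℝ)
    (hβ : (∫ s in (0:ℝ)..1,
        φ s / s * (((1 + s ^ 2) ^ ((n + 1 : ℝ) / 2)) / s ^ n) ^ (-γ)) < β)
    (f : ℝ → ℝ)
    (hf : f = fun r => (((1 + r ^ 2) ^ ((n + 1 : ℝ) / 2)) / r ^ n) ^ γ *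
      ((∫ s in (1:ℝ)..r,
        φ s / s * (((1 + s ^ 2) ^ ((n + 1 : ℝ) / 2)) / s ^ n) ^ (-γ)) + β)) :
    (∀ r ∈ Ioi (0 : ℝ), 0 < f r) ∧
    Tendsto f (nhdsWithin 0 (Ioi 0)) (nhds 0) ∧
    Tendsto f atTop (nhds (φinf / |γ|)) := by
  have hγ0 : γ < 0 := by
    rw [hγ]
    exact div_neg_of_neg_of_pos (by linarith) (by positivity)
  have hint : ∀ r > 0, IntervalIntegrable (weightedIntegrand n γ φ) volume 0 r :=
    fun _ => intervalIntegrable_weightedIntegrand hγ0.le hφcont hφnonneg hdecay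
  obtain rfl : f = radialSolution n γ β φ := hf
  refine ⟨fun r hr => radialSolution_pos hφnonneg hint hβ hr,
    tendsto_radialSolution_nhdsGT_zero (by omega) hγ0 (hint 1 one_pos), ?_⟩
  rw [abs_of_neg hγ0]
  exact tendsto_radialSolution_atTop hγ0 hφcont hφinf

/-- Properties of the explicit solution `f` of the radial ODE: for `p < −n−1`,
`γ = (p+n+1)/(n+1) < 0`, `φ` continuous nonnegative with limit `φ_∞ ∈ (0,∞)` at infinity
and rapid decay at `0`, and `β > ∫₀¹ φ(s)/s·[(1+s²)^{(n+1)/2}/sⁿ]^{−γ} ds`, the function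
`f(r) = [(1+r²)^{(n+1)/2}/rⁿ]^γ (∫₁^r φ(s)/s·[(1+s²)^{(n+1)/2}/sⁿ]^{−γ} ds + β)`
is positive on `(0,∞)`, tends to `0` as `r → 0⁺` and to `φ_∞/|γ|` as `r → ∞`. -/
theorem stmt7 (n : ℕ) (hn : 1 ≤ n) (p : ℝ) (hp : p < -(n + 1 : ℝ))
    (γ : ℝ) (hγ : γ = (p + n + 1) / (n + 1))
    (φ : ℝ → ℝ) (hφcont : ContinuousOn φ (Ioi 0))
    (hφnonneg : ∀ r ∈ Ioi (0 : ℝ), 0 ≤ φ r)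
    (φinf : ℝ) (hφinfpos : 0 < φinf) (hφinf : Tendsto φ atTop (nhds φinf))
    (hdecay : ∀ N : ℕ, ∃ C : ℝ, 0 < C ∧ ∀ r ∈ Ioo (0 : ℝ) 1, φ r ≤ C * r ^ N)
    (β : ℝ)
    (hβ : (∫ s in (0:ℝ)..1,
        φ s / s * (((1 + s ^ 2) ^ ((n + 1 : ℝ) / 2)) / s ^ n) ^ (-γ)) < β)
    (f : ℝ → ℝ)
    (hf : f = fun r => (((1 + r ^ 2) ^ ((n + 1 : ℝ) / 2)) / r ^ n) ^ γ *
      ((∫ s in (1:ℝ)..r,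
        φ s / s * (((1 + s ^ 2) ^ ((n + 1 : ℝ) / 2)) / s ^ n) ^ (-γ)) + β)) :
    (∀ r ∈ Ioi (0 : ℝ), 0 < f r) ∧
    Tendsto f (nhdsWithin 0 (Ioi 0)) (nhds 0) ∧
    Tendsto f atTop (nhds (φinf / |γ|)) :=
  stmt7_general n hn p hp γ hγ φ hφcont hφnonneg φinf hφinf hdecay β hβ f hf
end

section
/- Let n ≥ 1, p < 0, and let u : 𝕊ⁿ → (0,∞) be continuous, invariant under the symmetry group of a fixed regular simplex with vertices q₁,…,q_{n+2} ∈ 𝕊ⁿ, convex in the sense of being a support function, and satisfy ∫_{𝕊ⁿ} u^p = |𝕊ⁿ|. Then there is a constant C = C(n,p) (independent of u) such that u(x) ≤ C for all x ∈ 𝕊ⁿ. -/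
/-!
The vertex coordinates `⟪q i, x⟫` of a regular simplex form a tight frame, so every permutation
of the vertices is realised by a linear isometry. Ordering the coordinates of `z` and `v` alike
(a quantitative Chebyshev sum inequality) yields such a symmetry `φ` with
`⟪φ z, v⟫ ≥ ‖z‖ ‖v‖ / (2 (n + 2)³)`. If `u(x) = ⟪x, z⟫` with `z ∈ K`, then `u(x) ≤ ‖z‖`, while
the invariance gives `u(v) = u(φ⁻¹ v) ≥ ⟪φ⁻¹ v, z⟫ ≥ ‖z‖ / (2 (n + 2)³)` on the whole sphere;
since `p < 0`, the normalisation `∫ u^p = |𝕊ⁿ|` forces this lower bound to be at most `1`.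
-/

open Finset Module MeasureTheory Metric
open scoped RealInnerProductSpace

namespace Finset

lemma nonneg_of_sum_eq_zero_of_le {ι : Type*} [Fintype ι] [Nonempty ι] {c : ι → ℝ} {M : ℝ}
    (hc : ∑ i, c i = 0) (hM : ∀ i, c i ≤ M) : 0 ≤ M := by
  have h := sum_le_sum fun i (_ : i ∈ univ) => hM i
  rw [hc, sum_const, nsmul_eq_mul] at h
  exact nonneg_of_mul_nonneg_right h (by exact_mod_cast Fintype.card_pos)

lemma sum_sq_le_of_sum_eq_zero_of_le {ι : Type*} [Fintype ι] {c : ι → ℝ} {M : ℝ}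
    (hc : ∑ i, c i = 0) (hM : ∀ i, c i ≤ M) :
    ∑ i, c i ^ 2 ≤ (Fintype.card ι : ℝ) ^ 3 * M ^ 2 := by
  classical
  set N : ℝ := (Fintype.card ι : ℝ)
  have habs : ∀ i, |c i| ≤ N * M := fun i => by
    have : Nonempty ι := ⟨i⟩
    have hM0 := nonneg_of_sum_eq_zero_of_le hc hM
    have hN : 1 ≤ N := Nat.one_le_cast.mpr Fintype.card_pos
    have hrest : -c i ≤ (N - 1) * M := by
      have hsplit := add_sum_erase univ c (mem_univ i)
      have h := sum_le_sum fun j (_ : j ∈ univ.erase i) => hM j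
      rw [sum_const, card_erase_of_mem (mem_univ i), card_univ, nsmul_eq_mul,
        Nat.cast_pred Fintype.card_pos] at h
      linarith
    rw [abs_le]; constructor <;> nlinarith [hM i]
  calc ∑ i, c i ^ 2 ≤ ∑ _i : ι, (N * M) ^ 2 :=
        sum_le_sum fun i _ => sq_le_sq' (abs_le.mp (habs i)).1 (abs_le.mp (habs i)).2
    _ = N ^ 3 * M ^ 2 := by rw [sum_const, card_univ, nsmul_eq_mul]; ring

lemma sum_sub_mul_sub_of_sum_eq_zero {ι : Type*} [Fintype ι] {c d : ι → ℝ}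
    (hc : ∑ j, c j = 0) (hd : ∑ j, d j = 0) (i : ι) :
    ∑ j, (c i - c j) * (d i - d j) = Fintype.card ι * (c i * d i) + ∑ j, c j * d j := by
  have e : ∀ j, (c i - c j) * (d i - d j) = c i * d i - c i * d j - c j * d i + c j * d j :=
    fun j => by ring
  simp only [e, sum_add_distrib, sum_sub_distrib, ← mul_sum, ← sum_mul, hc, hd, sum_const,
    card_univ, nsmul_eq_mul]
  ring

lemma mul_le_two_mul_sum_mul_of_monotone {m : ℕ} {c d : Fin (m + 1) → ℝ}
    (hc : Monotone c) (hd : Monotone d) (hc0 : ∑ i, c i = 0) (hd0 : ∑ i, d i = 0) :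
    c (Fin.last m) * d (Fin.last m) ≤ 2 * ∑ i, c i * d i := by
  set T := ∑ i, c i * d i
  set N : ℝ := ((m + 1 : ℕ) : ℝ)
  have hN : 1 ≤ N := Nat.one_le_cast.mpr m.succ_pos
  -- the nonnegative double sum `∑ᵢ ∑ⱼ (cᵢ - cⱼ)(dᵢ - dⱼ) = 2 N T` dominates its row at `last`
  have hrow := sum_sub_mul_sub_of_sum_eq_zero hc0 hd0
  simp only [Fintype.card_fin] at hrow
  have hdouble : ∑ i, ∑ j, (c i - c j) * (d i - d j) = 2 * N * T := by
    simp only [hrow, sum_add_distrib, ← mul_sum, sum_const, card_univ, Fintype.card_fin,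
      nsmul_eq_mul]
    ring
  have hterm : ∀ i j, 0 ≤ (c i - c j) * (d i - d j) := fun i j => by
    rcases le_total i j with h | h
    · exact mul_nonneg_of_nonpos_of_nonpos (sub_nonpos.mpr (hc h)) (sub_nonpos.mpr (hd h))
    · exact mul_nonneg (sub_nonneg.mpr (hc h)) (sub_nonneg.mpr (hd h))
  have hrowL : N * (c (Fin.last m) * d (Fin.last m)) + T ≤ 2 * N * T := by
    rw [← hrow, ← hdouble]
    exact single_le_sum (f := fun i => ∑ j, (c i - c j) * (d i - d j))
      (fun i _ => sum_nonneg fun j _ => hterm i j) (mem_univ _)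
  have hT : 0 ≤ T := by
    have : 0 ≤ 2 * N * T := hdouble ▸ sum_nonneg fun i _ => sum_nonneg fun j _ => hterm i j
    exact nonneg_of_mul_nonneg_right this (by positivity)
  nlinarith

lemma exists_perm_sqrt_mul_sqrt_le_sum_mul {N : ℕ} {c d : Fin N → ℝ}
    (hc0 : ∑ i, c i = 0) (hd0 : ∑ i, d i = 0) :
    ∃ σ : Equiv.Perm (Fin N),
      √(∑ i, c i ^ 2) * √(∑ i, d i ^ 2) ≤ 2 * N ^ 3 * ∑ i, c i * d (σ i) := by
  rcases N with _ | m
  · exact ⟨1, by simp⟩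
  set sc := Tuple.sort c
  set sd := Tuple.sort d
  refine ⟨sc.symm.trans sd, ?_⟩
  have hsorted : ∑ i, c i * d ((sc.symm.trans sd) i) = ∑ i, c (sc i) * d (sd i) := by
    rw [← Equiv.sum_comp sc]
    simp
  have hc0' : ∑ i, c (sc i) = 0 := (Equiv.sum_comp sc c).trans hc0
  have hd0' : ∑ i, d (sd i) = 0 := (Equiv.sum_comp sd d).trans hd0
  set a := c (sc (Fin.last m))
  set b := d (sd (Fin.last m))
  have hca : ∀ i, c i ≤ a := fun i => by
    have := Tuple.monotone_sort c (Fin.le_last (sc.symm i))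
    rwa [Function.comp_apply, Function.comp_apply, Equiv.apply_symm_apply] at this
  have hdb : ∀ i, d i ≤ b := fun i => by
    have := Tuple.monotone_sort d (Fin.le_last (sd.symm i))
    rwa [Function.comp_apply, Function.comp_apply, Equiv.apply_symm_apply] at this
  have ha0 := nonneg_of_sum_eq_zero_of_le hc0 hca
  have hb0 := nonneg_of_sum_eq_zero_of_le hd0 hdb
  have hsq : √(∑ i, c i ^ 2) * √(∑ i, d i ^ 2) ≤ ((m + 1 : ℕ) : ℝ) ^ 3 * (a * b) := by
    rw [← Real.sqrt_mul (sum_nonneg fun i _ => sq_nonneg _), Real.sqrt_le_left (by positivity)]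
    have := mul_le_mul (sum_sq_le_of_sum_eq_zero_of_le hc0 hca)
      (sum_sq_le_of_sum_eq_zero_of_le hd0 hdb) (sum_nonneg fun i _ => sq_nonneg _) (by positivity)
    simp only [Fintype.card_fin] at this
    linarith
  have hcheb : a * b ≤ 2 * ∑ i, c (sc i) * d (sd i) :=
    mul_le_two_mul_sum_mul_of_monotone (Tuple.monotone_sort c) (Tuple.monotone_sort d) hc0' hd0'
  rw [hsorted]
  calc _ ≤ ((m + 1 : ℕ) : ℝ) ^ 3 * (a * b) := hsq
    _ ≤ ((m + 1 : ℕ) : ℝ) ^ 3 * (2 * ∑ i, c (sc i) * d (sd i)) := by gcongr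
    _ = _ := by ring

end Finset

section RealInnerProductSpace

variable {E : Type*} [NormedAddCommGroup E] [InnerProductSpace ℝ E] {n : ℕ}

structure IsRegularSimplex (q : Fin (n + 2) → E) : Prop where
  norm_eq_one : ∀ i, ‖q i‖ = 1
  inner_eq : ∀ i j, i ≠ j → ⟪q i, q j⟫ = -1 / (n + 1)

namespace IsRegularSimplex

variable {q : Fin (n + 2) → E} (hq : IsRegularSimplex q)
include hq

lemma comp_perm (σ : Equiv.Perm (Fin (n + 2))) : IsRegularSimplex (q ∘ σ) :=
  ⟨fun i => hq.norm_eq_one (σ i), fun i j hij => hq.inner_eq (σ i) (σ j) (σ.injective.ne hij)⟩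

lemma inner_sum_smul (a : Fin (n + 2) → ℝ) (j : Fin (n + 2)) :
    ⟪q j, ∑ i, a i • q i⟫ = ((n + 2) * a j - ∑ i, a i) / (n + 1) := by
  have hgram : ∀ i, ⟪q j, q i⟫ = -1 / (n + 1) + if i = j then ((n : ℝ) + 2) / (n + 1) else 0 := by
    intro i
    rcases eq_or_ne i j with rfl | hij
    · rw [if_pos rfl, real_inner_self_eq_norm_sq, hq.norm_eq_one]
      field_simp
      ring
    · rw [if_neg hij, hq.inner_eq j i (Ne.symm hij), add_zero]
  simp only [inner_sum, real_inner_smul_right, hgram, mul_add, mul_ite, mul_zero, sum_add_distrib,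
    sum_ite_eq', mem_univ, if_true, ← sum_mul]
  field_simp
  ring

lemma sum_eq_zero : ∑ i, q i = 0 := by
  have h : ∀ j, ⟪q j, ∑ i, q i⟫ = 0 := fun j => by
    simpa using hq.inner_sum_smul (fun _ => 1) j
  rw [← inner_self_eq_zero (𝕜 := ℝ), sum_inner]
  exact Finset.sum_eq_zero fun j _ => h j

lemma sum_inner_eq_zero (x : E) : ∑ i, ⟪q i, x⟫ = 0 := by
  rw [← sum_inner, hq.sum_eq_zero, inner_zero_left]

lemma linearIndependent_castSucc : LinearIndependent ℝ fun i : Fin (n + 1) => q i.castSucc := by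
  rw [Fintype.linearIndependent_iff]
  intro g hg
  set a : Fin (n + 2) → ℝ := Fin.snoc g 0
  have ha : ∑ i, a i • q i = 0 := by simp [a, Fin.sum_univ_castSucc, hg]
  -- by `inner_sum_smul`, all `a j` equal `(∑ a) / (n + 2)`, and `a (last) = 0`
  have hconst : ∀ j, (n + 2) * a j = ∑ i, a i := fun j => by
    have h := hq.inner_sum_smul a j
    rw [ha, inner_zero_right, eq_comm, div_eq_zero_iff] at h
    have : (n : ℝ) + 1 ≠ 0 := by positivity
    linarith [h.resolve_right this]
  have hsum : ∑ i, a i = 0 := by simpa [a] using (hconst (Fin.last _)).symm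
  intro i
  have : (n : ℝ) + 2 ≠ 0 := by positivity
  simpa [a, hsum, this] using hconst i.castSucc

variable (hE : finrank ℝ E = n + 1)
include hE

lemma ext_inner {x y : E} (h : ∀ i, ⟪q i, x⟫ = ⟪q i, y⟫) : x = y :=
  InnerProductSpace.ext_inner_left_basis
    (basisOfLinearIndependentOfCardEqFinrank hq.linearIndependent_castSucc (by simp [hE]))
    fun i => by simpa using h i.castSucc

lemma sum_inner_smul_eq_smul (x : E) : ∑ i, ⟪q i, x⟫ • q i = ((n + 2) / (n + 1) : ℝ) • x := by
  refine hq.ext_inner hE fun j => ?_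
  rw [hq.inner_sum_smul, hq.sum_inner_eq_zero, real_inner_smul_right]
  ring

lemma sum_inner_sq (x : E) : ∑ i, ⟪q i, x⟫ ^ 2 = (n + 2) / (n + 1) * ‖x‖ ^ 2 := by
  have h := congrArg (⟪x, ·⟫) (hq.sum_inner_smul_eq_smul hE x)
  simp only [inner_sum, real_inner_smul_right, real_inner_self_eq_norm_sq, real_inner_comm x] at h
  simpa [sq, real_inner_comm] using h

lemma exists_linearIsometryEquiv_apply_eq (σ : Equiv.Perm (Fin (n + 2))) :
    ∃ φ : E ≃ₗᵢ[ℝ] E, ∀ i, φ (q i) = q (σ i) := by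
  have hqσ := hq.comp_perm σ
  have hk : ((n : ℝ) + 1) / (n + 2) * ((n + 2) / (n + 1)) = 1 := by field_simp
  let f : E →ₗ[ℝ] E := (((n : ℝ) + 1) / (n + 2)) • ∑ i, (innerₛₗ ℝ (q i)).smulRight (q (σ i))
  have hf : ∀ y, f y = (((n : ℝ) + 1) / (n + 2)) • ∑ i, ⟪q i, y⟫ • q (σ i) := fun y => by
    simp [f]
  have hcoord : ∀ y j, ⟪q (σ j), f y⟫ = ⟪q j, y⟫ := fun y j => by
    rw [hf, real_inner_smul_right]
    have := hqσ.inner_sum_smul (fun i => ⟪q i, y⟫) j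
    simp only [Function.comp_apply] at this
    rw [this, hq.sum_inner_eq_zero, sub_zero]
    field_simp
  have hinner : ∀ y z, ⟪f y, f z⟫ = ⟪y, z⟫ := fun y z => by
    conv_rhs => rw [← one_smul ℝ z, ← hk, ← smul_smul, ← hq.sum_inner_smul_eq_smul hE z]
    rw [hf z, real_inner_smul_right, real_inner_smul_right, inner_sum, inner_sum]
    congr 1
    refine sum_congr rfl fun i _ => ?_
    rw [real_inner_smul_right, real_inner_smul_right, real_inner_comm (q (σ i)), hcoord,
      real_inner_comm (q i) y]
  have : FiniteDimensional ℝ E := .of_finrank_pos (by omega)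
  refine ⟨(f.isometryOfInner hinner).toLinearIsometryEquiv rfl, fun j => ?_⟩
  refine hqσ.ext_inner hE fun i => ?_
  show ⟪q (σ i), f (q j)⟫ = ⟪q (σ i), q (σ j)⟫
  rw [hcoord]
  rcases eq_or_ne i j with rfl | hij
  · rw [real_inner_self_eq_norm_sq, real_inner_self_eq_norm_sq, hq.norm_eq_one,
      hq.norm_eq_one]
  · rw [hq.inner_eq i j hij, hq.inner_eq _ _ (σ.injective.ne hij)]

lemma exists_symmetry_norm_mul_norm_le_inner (x v : E) :
    ∃ φ : E ≃ₗᵢ[ℝ] E, (∃ σ : Equiv.Perm (Fin (n + 2)), ∀ i, φ (q i) = q (σ i)) ∧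
      ‖x‖ * ‖v‖ ≤ 2 * (n + 2) ^ 3 * ⟪φ x, v⟫ := by
  obtain ⟨σ, hσ⟩ :=
    Finset.exists_perm_sqrt_mul_sqrt_le_sum_mul (hq.sum_inner_eq_zero x) (hq.sum_inner_eq_zero v)
  obtain ⟨φ, hφ⟩ := hq.exists_linearIsometryEquiv_apply_eq hE σ
  refine ⟨φ, ⟨σ, hφ⟩, ?_⟩
  have hφx : (n + 2) / (n + 1) * ⟪φ x, v⟫ = ∑ i, ⟪q i, x⟫ * ⟪q (σ i), v⟫ := by
    have := congrArg (fun y => ⟪φ y, v⟫) (hq.sum_inner_smul_eq_smul hE x)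
    simpa only [map_sum, map_smul, hφ, sum_inner, real_inner_smul_left, eq_comm] using this
  have hnorms : √(∑ i, ⟪q i, x⟫ ^ 2) * √(∑ i, ⟪q i, v⟫ ^ 2)
      = (n + 2) / (n + 1) * (‖x‖ * ‖v‖) := by
    rw [hq.sum_inner_sq hE, hq.sum_inner_sq hE, ← Real.sqrt_mul (by positivity),
      ← Real.sqrt_sq (by positivity : (0 : ℝ) ≤ (n + 2) / (n + 1) * (‖x‖ * ‖v‖))]
    ring_nf
  push_cast at hσ
  rw [hnorms, ← hφx] at hσ
  have hk : (0 : ℝ) < (n + 2) / (n + 1) := by positivity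
  nlinarith

lemma norm_mul_norm_le_of_invariant {u : E → ℝ}
    (hu : ∀ φ : E ≃ₗᵢ[ℝ] E, (∃ σ : Equiv.Perm (Fin (n + 2)), ∀ i, φ (q i) = q (σ i)) →
      ∀ x, u (φ x) = u x)
    {z : E} (hz : ∀ y, ⟪y, z⟫ ≤ u y) (v : E) : ‖z‖ * ‖v‖ ≤ 2 * (n + 2) ^ 3 * u v := by
  obtain ⟨φ, hφ, hle⟩ := hq.exists_symmetry_norm_mul_norm_le_inner hE z v
  have hφv : ⟪φ z, v⟫ ≤ u v := by
    rw [← φ.apply_symm_apply v, φ.inner_map_map, real_inner_comm, hu φ hφ]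
    exact hz (φ.symm v)
  calc ‖z‖ * ‖v‖ ≤ 2 * (n + 2) ^ 3 * ⟪φ z, v⟫ := hle
    _ ≤ 2 * (n + 2) ^ 3 * u v := by gcongr

end IsRegularSimplex

lemma IsCompact.exists_mem_sSup_image_inner_eq {K : Set E} (hK : IsCompact K) (hK0 : K.Nonempty)
    (x : E) : ∃ z ∈ K, sSup ((fun z => ⟪x, z⟫) '' K) = ⟪x, z⟫ := by
  obtain ⟨z, hz, hxz⟩ := (hK.image (f := fun z => ⟪x, z⟫) (by fun_prop)).sSup_mem (hK0.image _)
  exact ⟨z, hz, hxz.symm⟩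

lemma IsCompact.inner_le_sSup_image_inner {K : Set E} (hK : IsCompact K) {z : E} (hz : z ∈ K)
    (x : E) : ⟪x, z⟫ ≤ sSup ((fun z => ⟪x, z⟫) '' K) :=
  le_csSup (hK.image (by fun_prop)).bddAbove (Set.mem_image_of_mem _ hz)

end RealInnerProductSpace

lemma le_one_of_le_of_integral_rpow_eq {α : Type*} [MeasurableSpace α] {μ : Measure α}
    [IsFiniteMeasure μ] [NeZero μ] {f : α → ℝ} {m p : ℝ} (hp : p < 0) (hf : ∀ x, 0 < f x)
    (hm : ∀ x, m ≤ f x) (h : ∫ x, f x ^ p ∂μ = μ.real Set.univ) : m ≤ 1 := by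
  by_contra! hm1
  have hint : ∫ x, f x ^ p ∂μ ≤ ∫ _, m ^ p ∂μ :=
    integral_mono_of_nonneg (ae_of_all _ fun x => Real.rpow_nonneg (hf x).le _)
      (integrable_const _)
      (ae_of_all _ fun x => Real.rpow_le_rpow_of_nonpos (by linarith) (hm x) hp.le)
  rw [h, integral_const, smul_eq_mul] at hint
  have := Real.rpow_lt_one_of_one_lt_of_neg hm1 hp
  nlinarith [measureReal_univ_pos (μ := μ)]

theorem stmt12_general (n : ℕ) (p : ℝ) (hp : p < 0) :
    ∃ C : ℝ, 0 < C ∧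
      ∀ (q : Fin (n + 2) → EuclideanSpace ℝ (Fin (n + 1))),
        (∀ i, ‖q i‖ = 1) → (∑ i, q i = 0) →
        (∀ i j, i ≠ j → ⟪q i, q j⟫ = -1 / (n + 1)) →
      ∀ (K : Set (EuclideanSpace ℝ (Fin (n + 1))))
        (u : EuclideanSpace ℝ (Fin (n + 1)) → ℝ),
        Convex ℝ K → IsCompact K → (0 : EuclideanSpace ℝ (Fin (n + 1))) ∈ K →
        (∀ x, u x = sSup ((fun z => ⟪x, z⟫) '' K)) →
        (∀ x, ‖x‖ = 1 → 0 < u x) →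
        (∀ φ : EuclideanSpace ℝ (Fin (n + 1)) ≃ₗᵢ[ℝ] EuclideanSpace ℝ (Fin (n + 1)),
          (∃ σ : Equiv.Perm (Fin (n + 2)), ∀ i, φ (q i) = q (σ i)) →
          ∀ x, u (φ x) = u x) →
        (∫ x : sphere (0 : EuclideanSpace ℝ (Fin (n + 1))) 1, (u x) ^ p
            ∂((volume : Measure (EuclideanSpace ℝ (Fin (n + 1)))).toSphere)) =
          (((volume : Measure (EuclideanSpace ℝ (Fin (n + 1)))).toSphere)
            Set.univ).toReal →
        ∀ x, ‖x‖ = 1 → u x ≤ C := by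
  refine ⟨2 * (n + 2) ^ 3, by positivity, ?_⟩
  intro q hq1 _ hqij K u _ hK h0K hu hupos hsym hnorm x hx
  have hq : IsRegularSimplex q := ⟨hq1, hqij⟩
  obtain ⟨z, hzK, hxz⟩ := hK.exists_mem_sSup_image_inner_eq ⟨0, h0K⟩ x
  have hlow : ∀ v : sphere (0 : EuclideanSpace ℝ (Fin (n + 1))) 1,
      ‖z‖ / (2 * (n + 2) ^ 3) ≤ u v := fun v => by
    have := hq.norm_mul_norm_le_of_invariant finrank_euclideanSpace_fin hsym
      (fun y => (hu y).symm ▸ hK.inner_le_sSup_image_inner hzK y) v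
    rw [norm_eq_of_mem_sphere v, mul_one] at this
    rwa [div_le_iff₀' (by positivity)]
  have : NeZero (volume : Measure (EuclideanSpace ℝ (Fin (n + 1)))).toSphere := ⟨by simp⟩
  have hz1 := le_one_of_le_of_integral_rpow_eq
    (f := fun v : sphere (0 : EuclideanSpace ℝ (Fin (n + 1))) 1 => u v) hp
    (fun v => hupos v (norm_eq_of_mem_sphere v)) hlow hnorm
  calc u x = ⟪x, z⟫ := (hu x).trans hxz
    _ ≤ ‖x‖ * ‖z‖ := real_inner_le_norm x z
    _ ≤ 2 * (n + 2) ^ 3 := by rwa [hx, one_mul, ← div_le_one (by positivity)]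

/-- A priori upper bound: for `n ≥ 1`, `p < 0`, there is `C = C(n,p)` such that every
support function `u` of a convex body containing the origin which is positive on `𝕊ⁿ`,
invariant under the symmetry group of a regular simplex with vertices
`q₁,…,q_{n+2} ∈ 𝕊ⁿ`, and normalized by `∫_{𝕊ⁿ} u^p = |𝕊ⁿ|`, satisfies `u ≤ C` on `𝕊ⁿ`. -/
theorem stmt12 (n : ℕ) (hn : 1 ≤ n) (p : ℝ) (hp : p < 0) :
    ∃ C : ℝ, 0 < C ∧
      ∀ (q : Fin (n + 2) → EuclideanSpace ℝ (Fin (n + 1))),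
        (∀ i, ‖q i‖ = 1) → (∑ i, q i = 0) →
        (∀ i j, i ≠ j → ⟪q i, q j⟫ = -1 / (n + 1)) →
      ∀ (K : Set (EuclideanSpace ℝ (Fin (n + 1))))
        (u : EuclideanSpace ℝ (Fin (n + 1)) → ℝ),
        Convex ℝ K → IsCompact K → (0 : EuclideanSpace ℝ (Fin (n + 1))) ∈ K →
        (∀ x, u x = sSup ((fun z => ⟪x, z⟫) '' K)) →
        (∀ x, ‖x‖ = 1 → 0 < u x) →
        (∀ φ : EuclideanSpace ℝ (Fin (n + 1)) ≃ₗᵢ[ℝ] EuclideanSpace ℝ (Fin (n + 1)),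
          (∃ σ : Equiv.Perm (Fin (n + 2)), ∀ i, φ (q i) = q (σ i)) →
          ∀ x, u (φ x) = u x) →
        (∫ x : sphere (0 : EuclideanSpace ℝ (Fin (n + 1))) 1, (u x) ^ p
            ∂((volume : Measure (EuclideanSpace ℝ (Fin (n + 1)))).toSphere)) =
          (((volume : Measure (EuclideanSpace ℝ (Fin (n + 1)))).toSphere)
            Set.univ).toReal →
        ∀ x, ‖x‖ = 1 → u x ≤ C :=
  stmt12_general n p hp
end

section
/- Let n ≥ 1 and p ≤ −n. Suppose v : B₂ ⊂ ℝⁿ → (0,∞) is convex, v(0) = m > 0, |v(y) − m| ≤ C₁|y| on B₁, and ∫_{B₁} v^p dy ≤ C₂. Then m ≥ c(n, p, C₁, C₂) > 0; explicitly, ∫_{B₁}(m + C₁|y|)^p dy diverges to +∞ as m → 0⁺ when p ≤ −n, giving a positive lower bound on m. -/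
/-!
Once `‖y‖ ≥ m / C₁` we have `v y ≤ m + C₁‖y‖ ≤ 2C₁‖y‖`, hence `v y ^ p ≥ (2C₁)^p ‖y‖^(-n)` on the
shell `m / C₁ < ‖y‖ < 1`. In polar coordinates `‖y‖^(-n)` integrates over that shell to
`n |B₁| log (C₁ / m)`, so `∫_{B₁} v^p ≤ C₂` forces `m ≥ C₁ exp (-C₂ / ((2C₁)^p n |B₁|))`.
Convexity enters only through continuity: it makes `v^p` integrable on `B₁`, so that the
hypothesis on the Bochner integral is not a statement about its junk value `0`.
-/

open MeasureTheory Metric Set Real Module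

theorem mul_inv_pow_le_rpow_of_le_add {n : ℕ} {p C m r v : ℝ} (hp : p ≤ -(n : ℝ)) (hC : 0 < C)
    (hmr : m ≤ C * r) (hr₀ : 0 < r) (hr₁ : r ≤ 1) (hv : 0 < v) (hvr : v ≤ m + C * r) :
    (2 * C) ^ p * r⁻¹ ^ n ≤ v ^ p :=
  calc (2 * C) ^ p * r⁻¹ ^ n = (2 * C) ^ p * r ^ (-(n : ℝ)) := by
        rw [rpow_neg hr₀.le, rpow_natCast, inv_pow]
    _ ≤ (2 * C) ^ p * r ^ p :=
        mul_le_mul_of_nonneg_left (rpow_le_rpow_of_exponent_ge hr₀ hr₁ hp) (by positivity)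
    _ = (2 * C * r) ^ p := (mul_rpow (by positivity) hr₀.le).symm
    _ ≤ v ^ p := rpow_le_rpow_of_nonpos hv (by linarith) (hp.trans (by simp))

theorem ConvexOn.integrableOn_rpow {E : Type*} [NormedAddCommGroup E] [NormedSpace ℝ E]
    [FiniteDimensional ℝ E] [MeasurableSpace E] [OpensMeasurableSpace E] {μ : Measure E}
    [IsFiniteMeasureOnCompacts μ] {U K : Set E} {v : E → ℝ} (hv : ConvexOn ℝ U v)
    (hU : IsOpen U) (hK : IsCompact K) (hKU : K ⊆ U) (hpos : ∀ y ∈ K, 0 < v y) (p : ℝ) :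
    IntegrableOn (fun y ↦ v y ^ p) K μ :=
  ContinuousOn.integrableOn_compact hK <|
    ((hv.continuousOn hU).mono hKU).rpow_const fun y hy ↦ .inl (hpos y hy).ne'

section Radial

variable {E : Type*} [NormedAddCommGroup E] [NormedSpace ℝ E] [Nontrivial E]
  [FiniteDimensional ℝ E] [MeasurableSpace E] [BorelSpace E] (μ : Measure E) [μ.IsAddHaarMeasure]

theorem integral_indicator_Ioo_inv_pow_finrank_norm {a : ℝ} (ha₀ : 0 < a) (ha₁ : a ≤ 1) :
    ∫ x, (Ioo a 1).indicator (fun r ↦ r⁻¹ ^ finrank ℝ E) ‖x‖ ∂μ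
      = finrank ℝ E * μ.real (ball 0 1) * log a⁻¹ := by
  have hn : finrank ℝ E ≠ 0 := finrank_pos.ne'
  have hIoo : ∀ y ∈ Ioo a 1, y ^ (finrank ℝ E - 1) * y⁻¹ ^ finrank ℝ E = y⁻¹ := by
    intro y hy
    have hy₀ : y ≠ 0 := (ha₀.trans hy.1).ne'
    rw [inv_pow, ← pow_sub_one_mul hn]
    field_simp
  have hradial : ∫ y in Ioi (0 : ℝ), y ^ (finrank ℝ E - 1) •
      (Ioo a 1).indicator (fun r ↦ r⁻¹ ^ finrank ℝ E) y = log a⁻¹ := by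
    simp_rw [smul_eq_mul, ← indicator_mul_right _ (fun y ↦ y ^ (finrank ℝ E - 1))]
    rw [setIntegral_indicator measurableSet_Ioo,
      inter_eq_right.2 (Ioo_subset_Ioi_self.trans (Ioi_subset_Ioi ha₀.le)),
      setIntegral_congr_fun measurableSet_Ioo hIoo, ← integral_Ioc_eq_integral_Ioo,
      ← intervalIntegral.integral_of_le ha₁, integral_inv_of_pos ha₀ one_pos, one_div]
  rw [integral_fun_norm_addHaar, hradial, nsmul_eq_mul, smul_eq_mul, mul_assoc]

theorem mul_log_le_setIntegral_rpow_of_le_add_norm {p C m : ℝ} {v : E → ℝ}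
    (hp : p ≤ -(finrank ℝ E : ℝ)) (hC : 0 < C) (hm : 0 < m)
    (hpos : ∀ y ∈ ball (0 : E) 1, 0 < v y) (hv : ∀ y ∈ ball (0 : E) 1, v y ≤ m + C * ‖y‖)
    (hint : IntegrableOn (fun y ↦ v y ^ p) (ball 0 1) μ) :
    (2 * C) ^ p * (finrank ℝ E * μ.real (ball 0 1) * log (C / m))
      ≤ ∫ y in ball 0 1, v y ^ p ∂μ := by
  have hnonneg : 0 ≤ ∫ y in ball 0 1, v y ^ p ∂μ :=
    setIntegral_nonneg measurableSet_ball fun y hy ↦ (rpow_pos_of_pos (hpos y hy) p).le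
  rcases le_total C m with hCm | hmC
  · have hlog : log (C / m) ≤ 0 := log_nonpos (by positivity) ((div_le_one₀ hm).2 hCm)
    exact le_trans (mul_nonpos_of_nonneg_of_nonpos (by positivity)
      (mul_nonpos_of_nonneg_of_nonpos (by positivity) hlog)) hnonneg
  have ha₀ : 0 < m / C := div_pos hm hC
  rw [← inv_div, ← integral_indicator_Ioo_inv_pow_finrank_norm μ ha₀ ((div_le_one hC).2 hmC),
    ← integral_const_mul, ← integral_indicator measurableSet_ball]
  refine integral_mono_of_nonneg (.of_forall fun y ↦ ?_)
    (hint.integrable_indicator measurableSet_ball) (.of_forall fun y ↦ ?_)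
  · exact mul_nonneg (rpow_nonneg (by positivity) p)
      (indicator_nonneg (fun r hr ↦ pow_nonneg (inv_nonneg.2 (ha₀.trans hr.1).le) _) _)
  beta_reduce
  by_cases hy : ‖y‖ ∈ Ioo (m / C) 1
  · have hyb : y ∈ ball (0 : E) 1 := mem_ball_zero_iff.2 hy.2
    rw [indicator_of_mem hy, indicator_of_mem hyb]
    exact mul_inv_pow_le_rpow_of_le_add hp hC ((div_le_iff₀' hC).1 hy.1.le) (ha₀.trans hy.1) hy.2.le
      (hpos y hyb) (hv y hyb)
  · rw [indicator_of_notMem hy, mul_zero]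
    exact indicator_nonneg (fun y hy ↦ (rpow_pos_of_pos (hpos y hy) p).le) y

end Radial

theorem stmt13_general (n : ℕ) (hn : 1 ≤ n) (p : ℝ) (hp : p ≤ -(n : ℝ))
    (C₁ C₂ : ℝ) (hC₁ : 0 < C₁) :
    ∃ c : ℝ, 0 < c ∧
      ∀ (v : EuclideanSpace ℝ (Fin n) → ℝ) (m : ℝ),
        ConvexOn ℝ (ball (0 : EuclideanSpace ℝ (Fin n)) 2) v →
        (∀ y ∈ ball (0 : EuclideanSpace ℝ (Fin n)) 2, 0 < v y) →
        v 0 = m → 0 < m →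
        (∀ y ∈ ball (0 : EuclideanSpace ℝ (Fin n)) 1, |v y - m| ≤ C₁ * ‖y‖) →
        (∫ y in ball (0 : EuclideanSpace ℝ (Fin n)) 1, v y ^ p) ≤ C₂ →
        c ≤ m := by
  have : NeZero n := ⟨by omega⟩
  have hfinrank := finrank_euclideanSpace_fin (𝕜 := ℝ) (n := n)
  set B := (2 * C₁) ^ p * (n * volume.real (ball (0 : EuclideanSpace ℝ (Fin n)) 1))
  have hB : 0 < B := by
    have hvol : 0 < volume.real (ball (0 : EuclideanSpace ℝ (Fin n)) 1) :=
      ENNReal.toReal_pos (measure_ball_pos _ _ one_pos).ne' measure_ball_lt_top.ne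
    have : (0 : ℝ) < n := by exact_mod_cast hn
    positivity
  refine ⟨C₁ * exp (-(C₂ / B)), by positivity, fun v m hconv hpos _ hm hlip hint ↦ ?_⟩
  have hball : ball (0 : EuclideanSpace ℝ (Fin n)) 1 ⊆ ball 0 2 := ball_subset_ball one_le_two
  have hint_v : IntegrableOn (fun y ↦ v y ^ p) (ball 0 1) :=
    (hconv.integrableOn_rpow isOpen_ball (isCompact_closedBall 0 1)
      (closedBall_subset_ball one_lt_two) (fun y hy ↦ hpos y (closedBall_subset_ball one_lt_two hy))
      p).mono_set ball_subset_closedBall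
  have hlower := mul_log_le_setIntegral_rpow_of_le_add_norm volume (by rwa [hfinrank]) hC₁ hm
    (fun y hy ↦ hpos y (hball hy)) (fun y hy ↦ by linarith [(abs_le.1 (hlip y hy)).2]) hint_v
  rw [hfinrank, ← mul_assoc, ← mul_assoc] at hlower
  have hlog : log (C₁ / m) ≤ C₂ / B := by rw [le_div_iff₀ hB]; linarith
  calc C₁ * exp (-(C₂ / B)) ≤ C₁ * exp (-log (C₁ / m)) := by gcongr
    _ = m := by rw [exp_neg, exp_log (by positivity)]; field_simp

/-- Lower barrier estimate: for `n ≥ 1`, `p ≤ −n` and constants `C₁, C₂ > 0`, there is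
`c = c(n,p,C₁,C₂) > 0` such that any positive convex `v` on `B₂ ⊂ ℝⁿ` with `v(0) = m`,
`|v(y) − m| ≤ C₁|y|` on `B₁` and `∫_{B₁} v^p ≤ C₂` satisfies `m ≥ c`. Indeed
`∫_{B₁}(m + C₁|y|)^p dy → ∞` as `m → 0⁺` when `p ≤ −n`. -/
theorem stmt13 (n : ℕ) (hn : 1 ≤ n) (p : ℝ) (hp : p ≤ -(n : ℝ))
    (C₁ C₂ : ℝ) (hC₁ : 0 < C₁) (hC₂ : 0 < C₂) :
    ∃ c : ℝ, 0 < c ∧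
      ∀ (v : EuclideanSpace ℝ (Fin n) → ℝ) (m : ℝ),
        ConvexOn ℝ (ball (0 : EuclideanSpace ℝ (Fin n)) 2) v →
        (∀ y ∈ ball (0 : EuclideanSpace ℝ (Fin n)) 2, 0 < v y) →
        v 0 = m → 0 < m →
        (∀ y ∈ ball (0 : EuclideanSpace ℝ (Fin n)) 1, |v y - m| ≤ C₁ * ‖y‖) →
        (∫ y in ball (0 : EuclideanSpace ℝ (Fin n)) 1, v y ^ p) ≤ C₂ →
        c ≤ m :=
  stmt13_general n hn p hp C₁ C₂ hC₁
end
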